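/- The function y ↦ ₂F₁(1/6, 5/6; 1; 1/2 + y/2) / ₂F₁(1/6, 5/6; 1; 1/2 − y/2) is a Pfaffian function of order 9 and degree (3,1) on the open interval (0,1). -/

import Mathlib

open Set

/-- The (real) Gaussian hypergeometric function
`₂F₁(a,b;c;x) = Σ_{n≥0} ((a)_n (b)_n / ((c)_n n!)) xⁿ`. -/
noncomputable def hyp2F1 (a b c x : ℝ) : ℝ :=
  ∑' n : ℕ,
    Polynomial.eval a (ascPochhammer ℝ n) * Polynomial.eval b (ascPochhammer ℝ n) /
      (Polynomial.eval c (ascPochhammer ℝ n) * (n.factorial : ℝ)) * x ^ n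

/-- `f : Fin r → ℝ → ℝ` is a *Pfaffian chain* of order `r` and degree `α` on the open
interval `(a,b)`: each `f i` is real analytic on `(a,b)` and satisfies
`(f i)' x = P_i (x, f 0 x, …, f i x)` for a real polynomial `P_i` of total degree at most `α`. -/
def IsPfaffianChain (r α : ℕ) (a b : ℝ) (f : Fin r → ℝ → ℝ) : Prop :=
  (∀ i : Fin r, AnalyticOnNhd ℝ (f i) (Set.Ioo a b)) ∧
  ∀ i : Fin r, ∃ P : MvPolynomial (Fin ((i : ℕ) + 2)) ℝ,
    P.totalDegree ≤ α ∧
    ∀ x ∈ Set.Ioo a b,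
      HasDerivAt (f i)
        (MvPolynomial.eval
          (Fin.cons x (fun j : Fin ((i : ℕ) + 1) => f (Fin.castLE i.isLt j) x)) P) x

/-- `F` is a *Pfaffian function* of order `r` and degree `(α, β)` on the open interval `(a,b)`:
`F x = Q(x, f 0 x, …, f (r-1) x)` for some Pfaffian chain `f` of order `r` and degree `α` on
`(a,b)` and some real polynomial `Q` of total degree at most `β`. -/
def IsPfaffianFunction (r α β : ℕ) (a b : ℝ) (F : ℝ → ℝ) : Prop :=
  ∃ f : Fin r → ℝ → ℝ, IsPfaffianChain r α a b f ∧
    ∃ Q : MvPolynomial (Fin (r + 1)) ℝ, Q.totalDegree ≤ β ∧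
      F = fun x => MvPolynomial.eval (Fin.cons x fun j : Fin r => f j x) Q

/-!
For `a + b = 1` the substitution `x = (1 + y) / 2` turns the hypergeometric equation of
`g = ₂F₁(a, b; 1; ·)` into Legendre's equation `(1 - y²) u'' - 2 y u' + κ u = 0` with `κ = -a b`.
That equation is invariant under `y ↦ -y`, so `u y = g ((1 + y) / 2)` and `v y = g ((1 - y) / 2)`
both solve it, and for `a, b > 0` neither vanishes on `(0, 1)`. With `P = (1 - y²)⁻¹` one has
`P' = 2 y P²`, the logarithmic derivative `Z` of a solution satisfies the Riccati equation
`Z' = 2 y P Z - κ P - Z²`, and `(u / v)' = (u / v) (u'/u - v'/v)`. So `P, u'/u, v'/v, u/v` is a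
Pfaffian chain of order 4 and degree 3 ending in the ratio; zero functions pad it to order 9.
-/

open FormalMultilinearSeries MvPolynomial

section PowerSeries

variable {𝕜 : Type*} [NontriviallyNormedField 𝕜] {m : ℕ → 𝕜} {f : 𝕜 → 𝕜} {r : ENNReal}

theorem HasFPowerSeriesOnBall.hasSum_ofScalars (h : HasFPowerSeriesOnBall f (ofScalars 𝕜 m) 0 r)
    {x : 𝕜} (hx : x ∈ Metric.eball 0 r) : HasSum (fun n => m n * x ^ n) (f x) := by
  simpa [ofScalars_apply_eq, mul_comm] using h.hasSum hx

theorem HasFPowerSeriesOnBall.deriv_ofScalars [CompleteSpace 𝕜]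
    (h : HasFPowerSeriesOnBall f (ofScalars 𝕜 m) 0 r) :
    HasFPowerSeriesOnBall (deriv f) (ofScalars 𝕜 fun n => (n + 1) * m (n + 1)) 0 r := by
  convert (ContinuousLinearMap.apply 𝕜 𝕜 1).comp_hasFPowerSeriesOnBall h.fderiv using 1
  · rfl
  ext n : 1
  rw [← mkPiRing_coeff_eq (ofScalars 𝕜 _),
    ← mkPiRing_coeff_eq (ContinuousLinearMap.compFormalMultilinearSeries _ _), coeff_ofScalars]
  have h := derivSeries_coeff_one (ofScalars 𝕜 m) n
  rw [nsmul_eq_mul, Nat.cast_add_one, coeff_ofScalars] at h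
  rw [← h]
  rfl

end PowerSeries

theorem mem_eball_zero_one_iff {x : ℝ} : x ∈ Metric.eball (0 : ℝ) 1 ↔ |x| < 1 := by
  rw [← ENNReal.coe_one, Metric.eball_coe, mem_ball_zero_iff, Real.norm_eq_abs, NNReal.coe_one]

theorem natCast_ne_neg_of_pos {a : ℝ} (ha : 0 < a) (k : ℕ) : (k : ℝ) ≠ -a := by
  linarith [k.cast_nonneg (α := ℝ)]

theorem hyp2F1_eq_ordinaryHypergeometric (a b c : ℝ) :
    hyp2F1 a b c = ordinaryHypergeometric a b c := by
  rw [ordinaryHypergeometric_eq_tsum]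
  ext x
  refine tsum_congr fun n => ?_
  rw [smul_eq_mul, div_eq_mul_inv, mul_inv]
  ring

theorem hasFPowerSeriesOnBall_hyp2F1 {a b c : ℝ}
    (habc : ∀ k : ℕ, (k : ℝ) ≠ -a ∧ (k : ℝ) ≠ -b ∧ (k : ℝ) ≠ -c) :
    HasFPowerSeriesOnBall (hyp2F1 a b c) (ordinaryHypergeometricSeries ℝ a b c) 0 1 := by
  have hr := ordinaryHypergeometricSeries_radius_eq_one (𝔸 := ℝ) a b c habc
  rw [hyp2F1_eq_ordinaryHypergeometric, ← hr]
  exact (ordinaryHypergeometricSeries ℝ a b c).hasFPowerSeriesOnBall (by simp [hr])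

theorem hyp2F1_pos {a b c x : ℝ} (ha : 0 < a) (hb : 0 < b) (hc : 0 < c) (hx₀ : 0 ≤ x)
    (hx₁ : x < 1) : 0 < hyp2F1 a b c x := by
  have hsum := (hasFPowerSeriesOnBall_hyp2F1 fun k => ⟨natCast_ne_neg_of_pos ha k,
    natCast_ne_neg_of_pos hb k, natCast_ne_neg_of_pos hc k⟩).hasSum_ofScalars
    (x := x) (mem_eball_zero_one_iff.mpr (by rwa [abs_of_nonneg hx₀]))
  refine one_pos.trans_le ?_
  simpa [ordinaryHypergeometricCoefficient] using le_hasSum hsum 0 fun n _ => by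
    have := ascPochhammer_pos n a ha
    have := ascPochhammer_pos n b hb
    have := ascPochhammer_pos n c hc
    positivity

theorem ordinaryHypergeometricCoefficient_succ {a b c : ℝ} (hc : ∀ k : ℕ, (k : ℝ) ≠ -c) (n : ℕ) :
    (n + 1) * (n + c) * ordinaryHypergeometricCoefficient a b c (n + 1) =
      (n + a) * (n + b) * ordinaryHypergeometricCoefficient a b c n := by
  have hpoch : (ascPochhammer ℝ n).eval c ≠ 0 := by
    rw [Ne, ascPochhammer_eval_eq_zero_iff]
    rintro ⟨k, -, hk⟩
    exact hc k hk
  have hcn : c + n ≠ 0 := fun h => hc n (by linarith)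
  simp only [ordinaryHypergeometricCoefficient, ascPochhammer_succ_eval, Nat.factorial_succ,
    Nat.cast_mul, Nat.cast_add_one]
  field_simp
  ring

theorem hypergeometric_ode_of_hasSum {a b c x g g' g'' : ℝ} {m : ℕ → ℝ}
    (hm : ∀ n : ℕ, (n + 1) * (n + c) * m (n + 1) = (n + a) * (n + b) * m n)
    (hg : HasSum (fun n => m n * x ^ n) g)
    (hg' : HasSum (fun n => (n + 1) * m (n + 1) * x ^ n) g')
    (hg'' : HasSum (fun n => (n + 1) * ((n + 1 + 1) * m (n + 1 + 1)) * x ^ n) g'') :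
    x * (1 - x) * g'' + (c - (a + b + 1) * x) * g' - a * b * g = 0 := by
  -- Apart from constant terms, every summand of the equation is a series in the powers
  -- `x ^ (n + 1)`; their coefficients cancel by `hm (n + 1)`, the constant terms by `hm 0`.
  have hxg'' := hg''.mul_left x
  have hg'_tail := (hasSum_nat_add_iff' 1).mpr hg'
  have hx2g'' : HasSum (fun n : ℕ => n * (n + 1) * m (n + 1) * x ^ (n + 1)) (x ^ 2 * g'') := by
    have hshift (n : ℕ) : ((n + 1 : ℕ) : ℝ) * ((n + 1 : ℕ) + 1) * m (n + 1 + 1) * x ^ (n + 1 + 1) =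
        x ^ 2 * ((n + 1) * ((n + 1 + 1) * m (n + 1 + 1)) * x ^ n) := by
      push_cast
      ring
    rw [← hasSum_nat_add_iff' 1]
    simpa only [Finset.range_one, Finset.sum_singleton, Nat.cast_zero, zero_mul, sub_zero, hshift]
      using hg''.mul_left (x ^ 2)
  have hxg' := hg'.mul_left x
  have hg_tail := (hasSum_nat_add_iff' 1).mpr hg
  have hzero := ((((hxg''.add (hg'_tail.mul_left c)).sub hx2g'').sub
    (hxg'.mul_left (a + b + 1))).sub (hg_tail.mul_left (a * b))).unique (by
      convert hasSum_zero with n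
      have := hm (n + 1)
      push_cast at this ⊢
      linear_combination x ^ (n + 1) * this)
  have h₀ := hm 0
  simp only [Finset.range_one, Finset.sum_singleton] at hzero
  push_cast at h₀ hzero
  linear_combination hzero + h₀

theorem hyp2F1_ode {a b c x : ℝ}
    (habc : ∀ k : ℕ, (k : ℝ) ≠ -a ∧ (k : ℝ) ≠ -b ∧ (k : ℝ) ≠ -c) (hx : |x| < 1) :
    x * (1 - x) * deriv (deriv (hyp2F1 a b c)) x + (c - (a + b + 1) * x) * deriv (hyp2F1 a b c) x
      - a * b * hyp2F1 a b c x = 0 := by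
  have h := hasFPowerSeriesOnBall_hyp2F1 habc
  have hx' : x ∈ Metric.eball (0 : ℝ) 1 := mem_eball_zero_one_iff.mpr hx
  have h₂ := h.deriv_ofScalars.deriv_ofScalars.hasSum_ofScalars hx'
  push_cast at h₂
  exact hypergeometric_ode_of_hasSum (ordinaryHypergeometricCoefficient_succ fun k => (habc k).2.2)
    (h.hasSum_ofScalars hx') (h.deriv_ofScalars.hasSum_ofScalars hx') h₂

def SolvesLegendreAt (κ : ℝ) (u : ℝ → ℝ) (y : ℝ) : Prop :=
  (1 - y ^ 2) * deriv (deriv u) y - 2 * y * deriv u y + κ * u y = 0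

theorem solvesLegendreAt_hyp2F1 {a b y : ℝ}
    (habc : ∀ k : ℕ, (k : ℝ) ≠ -a ∧ (k : ℝ) ≠ -b ∧ (k : ℝ) ≠ -1) (hab : a + b = 1)
    (hy : |1 / 2 + y / 2| < 1) :
    SolvesLegendreAt (-(a * b)) (fun t => hyp2F1 a b 1 (1 / 2 + t / 2)) y := by
  have hderiv (g : ℝ → ℝ) (t : ℝ) :
      deriv (fun t => g (1 / 2 + t / 2)) t = deriv g (1 / 2 + t / 2) / 2 := by
    have h := deriv_comp_mul_left (f := fun s => g (1 / 2 + s)) (2⁻¹ : ℝ) (x := t)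
    simp only [deriv_comp_const_add, smul_eq_mul, ← div_eq_inv_mul] at h
    rw [h, div_eq_inv_mul]
  have hode := hyp2F1_ode habc hy
  unfold SolvesLegendreAt
  rw [funext (hderiv _)]
  simp only [deriv_div_const, hderiv, hab] at hode ⊢
  linear_combination hode

theorem SolvesLegendreAt.comp_neg {κ y : ℝ} {u : ℝ → ℝ} (h : SolvesLegendreAt κ u (-y)) :
    SolvesLegendreAt κ (fun t => u (-t)) y := by
  unfold SolvesLegendreAt at h ⊢
  rw [funext fun t => deriv_comp_neg (f := u) (x := t), deriv.fun_neg, deriv_comp_neg]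
  beta_reduce
  linear_combination h

theorem SolvesLegendreAt.hasDerivAt_logDeriv {κ y : ℝ} {u : ℝ → ℝ} (h : SolvesLegendreAt κ u y)
    (hu : DifferentiableAt ℝ u y) (hu' : DifferentiableAt ℝ (deriv u) y) (hu₀ : u y ≠ 0)
    (hy : 1 - y ^ 2 ≠ 0) :
    HasDerivAt (logDeriv u)
      (2 * y * (1 - y ^ 2)⁻¹ * logDeriv u y - κ * (1 - y ^ 2)⁻¹ - logDeriv u y ^ 2) y := by
  refine (hu'.hasDerivAt.div hu.hasDerivAt hu₀).congr_deriv ?_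
  unfold SolvesLegendreAt at h
  rw [logDeriv_apply]
  field_simp
  linear_combination u y * h

theorem hasDerivAt_div_eq_mul_sub_logDeriv {𝕜 : Type*} [NontriviallyNormedField 𝕜] {u v : 𝕜 → 𝕜}
    {y : 𝕜} (hu : DifferentiableAt 𝕜 u y) (hv : DifferentiableAt 𝕜 v y) (hu₀ : u y ≠ 0)
    (hv₀ : v y ≠ 0) :
    HasDerivAt (fun t => u t / v t) (u y / v y * (logDeriv u y - logDeriv v y)) y := by
  refine (hu.hasDerivAt.div hv.hasDerivAt hv₀).congr_deriv ?_
  rw [logDeriv_apply, logDeriv_apply]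
  field_simp

theorem totalDegree_riccati_le {σ : Type*} (κ : ℝ) (i j k : σ) :
    (C 2 * X i * X j * X k - C κ * X j - X k ^ 2 : MvPolynomial σ ℝ).totalDegree ≤ 3 := by
  have h₃ : (C 2 * X i * X j * X k : MvPolynomial σ ℝ).IsHomogeneous 3 :=
    (((isHomogeneous_C _ _).mul (isHomogeneous_X _ i)).mul (isHomogeneous_X _ j)).mul
      (isHomogeneous_X _ k)
  have h₁ : (C κ * X j : MvPolynomial σ ℝ).IsHomogeneous 1 :=
    (isHomogeneous_C _ _).mul (isHomogeneous_X _ j)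
  have h₂ : (X k ^ 2 : MvPolynomial σ ℝ).IsHomogeneous 2 := (isHomogeneous_X _ k).pow 2
  refine (totalDegree_sub _ _).trans (max_le ((totalDegree_sub _ _).trans (max_le ?_ ?_)) ?_)
  · exact h₃.totalDegree_le
  · exact h₁.totalDegree_le.trans (by norm_num)
  · exact h₂.totalDegree_le.trans (by norm_num)

theorem isPfaffianChain_of_solvesLegendreAt {u v : ℝ → ℝ} {κ y₀ y₁ : ℝ}
    (hI : Ioo y₀ y₁ ⊆ Ioo (-1) 1)
    (hu : AnalyticOnNhd ℝ u (Ioo y₀ y₁)) (hv : AnalyticOnNhd ℝ v (Ioo y₀ y₁))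
    (hu₀ : ∀ y ∈ Ioo y₀ y₁, u y ≠ 0) (hv₀ : ∀ y ∈ Ioo y₀ y₁, v y ≠ 0)
    (hue : ∀ y ∈ Ioo y₀ y₁, SolvesLegendreAt κ u y)
    (hve : ∀ y ∈ Ioo y₀ y₁, SolvesLegendreAt κ v y) :
    IsPfaffianChain 4 3 y₀ y₁
      ![fun y => (1 - y ^ 2)⁻¹, logDeriv u, logDeriv v, fun y => u y / v y] := by
  have hsq (y : ℝ) (hy : y ∈ Ioo y₀ y₁) : 1 - y ^ 2 ≠ 0 := by
    obtain ⟨h₁, h₂⟩ := hI hy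
    nlinarith
  refine ⟨fun i => ?_, fun i => ?_⟩ <;> fin_cases i
  · exact (analyticOnNhd_const.sub (analyticOnNhd_id.pow 2)).inv hsq
  · exact hu.deriv.div hu hu₀
  · exact hv.deriv.div hv hv₀
  · exact hu.div hv hv₀
  · refine ⟨C 2 * X 0 * X 1 ^ 2, ?_, fun y hy => ?_⟩
    · exact (((isHomogeneous_C _ _).mul (isHomogeneous_X _ _)).mul
        ((isHomogeneous_X _ _).pow 2)).totalDegree_le
    · simp only [map_mul, map_pow, eval_C, eval_X]
      refine ((((hasDerivAt_id y).pow 2).const_sub 1).inv (hsq y hy)).congr_deriv ?_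
      simp [div_eq_mul_inv]
  · refine ⟨C 2 * X 0 * X 1 * X 2 - C κ * X 1 - X 2 ^ 2, totalDegree_riccati_le _ _ _ _,
      fun y hy => ?_⟩
    simp only [map_mul, map_sub, map_pow, eval_C, eval_X]
    exact (hue y hy).hasDerivAt_logDeriv (hu y hy).differentiableAt
      (hu.deriv y hy).differentiableAt (hu₀ y hy) (hsq y hy)
  · refine ⟨C 2 * X 0 * X 1 * X 3 - C κ * X 1 - X 3 ^ 2, totalDegree_riccati_le _ _ _ _,
      fun y hy => ?_⟩
    simp only [map_mul, map_sub, map_pow, eval_C, eval_X]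
    exact (hve y hy).hasDerivAt_logDeriv (hv y hy).differentiableAt
      (hv.deriv y hy).differentiableAt (hv₀ y hy) (hsq y hy)
  · refine ⟨X 4 * (X 2 - X 3), ?_, fun y hy => ?_⟩
    · exact ((isHomogeneous_X _ _).mul ((isHomogeneous_X _ _).sub
        (isHomogeneous_X _ _))).totalDegree_le.trans (by norm_num)
    · simp only [map_mul, map_sub, eval_X]
      exact hasDerivAt_div_eq_mul_sub_logDeriv (hu y hy).differentiableAt
        (hv y hy).differentiableAt (hu₀ y hy) (hv₀ y hy)

theorem IsPfaffianFunction.mono_order {r s α β : ℕ} {a b : ℝ} {F : ℝ → ℝ}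
    (hF : IsPfaffianFunction r α β a b F) (hrs : r ≤ s) : IsPfaffianFunction s α β a b F := by
  obtain ⟨f, ⟨hf_an, hf_deriv⟩, Q, hQ, rfl⟩ := hF
  let g : Fin s → ℝ → ℝ := fun i => if h : (i : ℕ) < r then f ⟨i, h⟩ else 0
  refine ⟨g, ⟨fun i => ?_, fun i => ?_⟩, rename (Fin.castLE (by omega)) Q,
    (totalDegree_rename_le _ _).trans hQ, ?_⟩
  · by_cases h : (i : ℕ) < r
    · simpa [g, h] using hf_an ⟨i, h⟩
    · simp only [g, h, dite_false]
      exact analyticOnNhd_const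
  · by_cases h : (i : ℕ) < r
    · obtain ⟨P, hP, hP_deriv⟩ := hf_deriv ⟨i, h⟩
      refine ⟨P, hP, fun x hx => ?_⟩
      have hcons : (fun j : Fin (i + 1) => g (Fin.castLE i.isLt j) x) =
          fun j => f (Fin.castLE (Fin.isLt ⟨i, h⟩) j) x :=
        funext fun j => by simp [g, show (j : ℕ) < r by omega]; rfl
      rw [show g i = f ⟨i, h⟩ from dif_pos h, hcons]
      exact hP_deriv x hx
    · exact ⟨0, by simp, fun x _ => by simp [g, h]⟩
  · funext x
    rw [eval_rename]
    refine congrArg (fun v => eval v Q) (funext fun j => Fin.cases rfl (fun j => ?_) j)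
    simp [g]

theorem isPfaffianFunction_div_of_solvesLegendreAt {u v : ℝ → ℝ} {κ y₀ y₁ : ℝ}
    (hI : Ioo y₀ y₁ ⊆ Ioo (-1) 1)
    (hu : AnalyticOnNhd ℝ u (Ioo y₀ y₁)) (hv : AnalyticOnNhd ℝ v (Ioo y₀ y₁))
    (hu₀ : ∀ y ∈ Ioo y₀ y₁, u y ≠ 0) (hv₀ : ∀ y ∈ Ioo y₀ y₁, v y ≠ 0)
    (hue : ∀ y ∈ Ioo y₀ y₁, SolvesLegendreAt κ u y)
    (hve : ∀ y ∈ Ioo y₀ y₁, SolvesLegendreAt κ v y) :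
    IsPfaffianFunction 4 3 1 y₀ y₁ fun y => u y / v y :=
  ⟨_, isPfaffianChain_of_solvesLegendreAt hI hu hv hu₀ hv₀ hue hve, X 4, (totalDegree_X _).le,
    funext fun y => by rw [eval_X]; rfl⟩

theorem isPfaffianFunction_hyp2F1_ratio {a b : ℝ} (ha : 0 < a) (hb : 0 < b) (hab : a + b = 1) :
    IsPfaffianFunction 4 3 1 0 1
      fun y => hyp2F1 a b 1 (1 / 2 + y / 2) / hyp2F1 a b 1 (1 / 2 - y / 2) := by
  set g := hyp2F1 a b 1
  have habc (k : ℕ) : (k : ℝ) ≠ -a ∧ (k : ℝ) ≠ -b ∧ (k : ℝ) ≠ -1 :=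
    ⟨natCast_ne_neg_of_pos ha k, natCast_ne_neg_of_pos hb k, natCast_ne_neg_of_pos one_pos k⟩
  have hg_an (x : ℝ) (hx : x ∈ Ioo 0 1) : AnalyticAt ℝ g x :=
    (hasFPowerSeriesOnBall_hyp2F1 habc).analyticOnNhd x
      (mem_eball_zero_one_iff.mpr (abs_lt.mpr ⟨by linarith [hx.1], hx.2⟩))
  have hg_ne (x : ℝ) (hx : x ∈ Ioo 0 1) : g x ≠ 0 := (hyp2F1_pos ha hb one_pos hx.1.le hx.2).ne'
  have hg_legendre (y : ℝ) (hy : y ∈ Ioo (-1) 1) :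
      SolvesLegendreAt (-(a * b)) (fun t => g (1 / 2 + t / 2)) y :=
    solvesLegendreAt_hyp2F1 habc hab (abs_lt.mpr ⟨by linarith [hy.1], by linarith [hy.2]⟩)
  have hplus (y : ℝ) (hy : y ∈ Ioo (0 : ℝ) 1) : 1 / 2 + y / 2 ∈ Ioo (0 : ℝ) 1 :=
    ⟨by linarith [hy.1], by linarith [hy.2]⟩
  have hminus (y : ℝ) (hy : y ∈ Ioo (0 : ℝ) 1) : 1 / 2 - y / 2 ∈ Ioo (0 : ℝ) 1 :=
    ⟨by linarith [hy.2], by linarith [hy.1]⟩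
  have hv : (fun y => g (1 / 2 - y / 2)) = fun y => g (1 / 2 + -y / 2) := by
    funext y
    ring_nf
  exact isPfaffianFunction_div_of_solvesLegendreAt (fun y hy => ⟨by linarith [hy.1], hy.2⟩)
    (fun y hy => (hg_an _ (hplus y hy)).fun_comp (f := fun t => 1 / 2 + t / 2) (by fun_prop))
    (fun y hy => (hg_an _ (hminus y hy)).fun_comp (f := fun t => 1 / 2 - t / 2) (by fun_prop))
    (fun y hy => hg_ne _ (hplus y hy)) (fun y hy => hg_ne _ (hminus y hy))
    (fun y hy => hg_legendre y ⟨by linarith [hy.1], hy.2⟩)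
    (fun y hy => hv ▸ (hg_legendre (-y) ⟨by linarith [hy.2], by linarith [hy.1]⟩).comp_neg)

/-- The function
`y ↦ ₂F₁(1/6,5/6;1;1/2+y/2) / ₂F₁(1/6,5/6;1;1/2−y/2)` is a Pfaffian function of order `9` and
degree `(3,1)` on `(0,1)`. -/
theorem hyp2F1_ratio_pfaffian :
    IsPfaffianFunction 9 3 1 0 1
      (fun y : ℝ =>
        hyp2F1 (1/6) (5/6) 1 (1/2 + y/2) / hyp2F1 (1/6) (5/6) 1 (1/2 - y/2)) :=
  (isPfaffianFunction_hyp2F1_ratio (by norm_num) (by norm_num) (by norm_num)).mono_order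
    (by norm_num)
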